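/- Let n = (n_x, n_y, n_z) ∈ ℝ³ be nonzero and set r = √(n_x² + n_y² + n_z²), ν = n_x + i·n_y, μ = n_x² + n_y², c = cos(r), s = sin(r), c' = cos(r/2), s' = sin(r/2). Then the matrix exponential of i·(n_x J_x + n_y J_y + n_z J_z) for the spin-1 matrices equals (1/(4r²)) times the 3×3 matrix with rows: [2(c+1)μ + 4c·n_z² + 4i·r·s·n_z, 4i·√2·conj(ν)·s'·(r·c' + i·n_z·s'), 2(c−1)·conj(ν)²]; [2√2·ν·((c−1)·n_z + i·r·s), 4(c·μ + n_z²), 2√2·conj(ν)·(−(c−1)·n_z + i·r·s)]; [2(c−1)·ν², 2√2·ν·(−(c−1)·n_z + i·r·s), 2(c+1)μ + 4c·n_z² − 4i·r·s·n_z]. -/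

import Mathlib

/-!
The matrix `n · J` has characteristic polynomial `X³ - r² X`, so `A = i (n · J)` satisfies
`A³ = -r² A`. The exponential series then collapses, `A ^ (2k+1) = (-r²)ᵏ A` and
`A ^ (2k+2) = (-r²)ᵏ A²`, and summing the sine and cosine series gives
`exp A = 1 + (sin r / r) A + ((1 - cos r) / r²) A²`. The stated entries are those of this
matrix, written with `s = 2 s' c'` and `c = 1 - 2 s'²`.
-/

open scoped Nat

lemma Real.sin_eq_two_mul_sin_half_mul_cos_half (x : ℝ) :
    Real.sin x = 2 * Real.sin (x / 2) * Real.cos (x / 2) := by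
  rw [← Real.sin_two_mul, mul_div_cancel₀ x two_ne_zero]

lemma Real.cos_eq_one_sub_two_mul_sin_half_sq (x : ℝ) :
    Real.cos x = 1 - 2 * Real.sin (x / 2) ^ 2 := by
  rw [← Real.cos_two_mul_eq_one_sub, mul_div_cancel₀ x two_ne_zero]

lemma sq_add_sq_add_sq_pos {x y z : ℝ} (h : (x, y, z) ≠ 0) : 0 < x ^ 2 + y ^ 2 + z ^ 2 := by
  contrapose! h
  simp only [Prod.mk_eq_zero]
  refine ⟨?_, ?_, ?_⟩ <;> nlinarith [sq_nonneg x, sq_nonneg y, sq_nonneg z]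

section CubicRelation

variable {𝔸 : Type*} [Ring 𝔸] [Algebra ℝ 𝔸] {A : 𝔸} {t : ℝ}

lemma pow_two_mul_add_one_of_pow_three (hA : A ^ 3 = t • A) (k : ℕ) :
    A ^ (2 * k + 1) = t ^ k • A := by
  induction k with
  | zero => simp
  | succ k ih =>
    rw [show 2 * (k + 1) + 1 = 2 * k + 1 + 2 by ring, pow_add, ih, smul_mul_assoc, ← pow_succ' A 2,
      hA, smul_smul, pow_succ]

lemma pow_two_mul_add_two_of_pow_three (hA : A ^ 3 = t • A) (k : ℕ) :
    A ^ (2 * k + 2) = t ^ k • A ^ 2 := by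
  rw [pow_succ, pow_two_mul_add_one_of_pow_three hA, smul_mul_assoc, ← sq]

variable [TopologicalSpace 𝔸] [IsTopologicalRing 𝔸] [ContinuousSMul ℝ 𝔸] [T2Space 𝔸]

theorem exp_eq_of_pow_three_eq_neg_sq_smul {θ : ℝ} (hθ : θ ≠ 0) (hA : A ^ 3 = -θ ^ 2 • A) :
    NormedSpace.exp A = 1 + (Real.sin θ / θ) • A + ((1 - Real.cos θ) / θ ^ 2) • A ^ 2 := by
  rw [NormedSpace.exp_eq_tsum ℝ]
  refine HasSum.tsum_eq ?_
  have hodd : HasSum (fun k ↦ ((2 * k + 1)! : ℝ)⁻¹ • A ^ (2 * k + 1)) ((Real.sin θ / θ) • A) := by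
    refine (((Real.hasSum_sin θ).div_const θ).smul_const A).congr_fun fun k ↦ ?_
    rw [pow_two_mul_add_one_of_pow_three hA, smul_smul]
    congr 1
    field_simp
    ring
  -- the cosine series matches the even terms from `k = 1` on once scaled by `-A ^ 2 / θ ^ 2`
  have heven : HasSum (fun k ↦ ((2 * k)! : ℝ)⁻¹ • A ^ (2 * k))
      (Real.cos θ • (-1 / θ ^ 2) • A ^ 2 + (1 - (-1 / θ ^ 2) • A ^ 2)) := by
    refine (((Real.hasSum_cos θ).smul_const ((-1 / θ ^ 2) • A ^ 2)).add
      (hasSum_ite_eq 0 (1 - (-1 / θ ^ 2) • A ^ 2))).congr_fun ?_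
    rintro (_ | k)
    · simp
    · rw [if_neg k.succ_ne_zero, add_zero, mul_add_one, pow_two_mul_add_two_of_pow_three hA,
        smul_smul, smul_smul]
      congr 1
      field_simp
      ring
  convert HasSum.even_add_odd (f := fun n ↦ (n ! : ℝ)⁻¹ • A ^ n) heven hodd using 1
  module

end CubicRelation

open Matrix

section SpinOne

variable {R : Type*} [CommRing R] (z p q : R)

/-- `n_x J_x + n_y J_y + n_z J_z = spinOneMatrix n_z (conj ν / √2) (ν / √2)`. -/
def spinOneMatrix : Matrix (Fin 3) (Fin 3) R := !![z, p, 0; q, 0, p; 0, q, -z]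

lemma spinOneMatrix_sq : spinOneMatrix z p q ^ 2 =
    !![z ^ 2 + p * q, z * p, p ^ 2;
      z * q, 2 * p * q, -(z * p);
      q ^ 2, -(z * q), p * q + z ^ 2] := by
  ext i j
  fin_cases i <;> fin_cases j <;> simp [spinOneMatrix, sq, mul_apply, Fin.sum_univ_three] <;> ring

lemma spinOneMatrix_pow_three :
    spinOneMatrix z p q ^ 3 = (z ^ 2 + 2 * p * q) • spinOneMatrix z p q := by
  rw [pow_succ, spinOneMatrix_sq]
  ext i j
  fin_cases i <;> fin_cases j <;> simp [spinOneMatrix, mul_apply, Fin.sum_univ_three] <;> ring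

theorem exp_I_smul_spinOneMatrix {z p q : ℂ} {θ : ℝ} (hθ : θ ≠ 0) (h : z ^ 2 + 2 * p * q = θ ^ 2) :
    NormedSpace.exp (Complex.I • spinOneMatrix z p q) =
      1 + (Complex.I * Real.sin θ / θ) • spinOneMatrix z p q -
        ((1 - Real.cos θ) / θ ^ 2 : ℂ) • spinOneMatrix z p q ^ 2 := by
  have hcube :
      (Complex.I • spinOneMatrix z p q) ^ 3 = -θ ^ 2 • Complex.I • spinOneMatrix z p q := by
    rw [smul_pow, spinOneMatrix_pow_three, h, smul_smul, ← Complex.coe_smul, smul_smul]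
    congr 1
    push_cast
    linear_combination (↑θ ^ 2 * Complex.I) * Complex.I_sq
  rw [exp_eq_of_pow_three_eq_neg_sq_smul hθ hcube, smul_pow, ← Complex.coe_smul, ← Complex.coe_smul,
    smul_smul, smul_smul, Complex.I_sq]
  push_cast
  module

end SpinOne

theorem exp_spin_one (nx ny nz : ℝ) (h : (nx, ny, nz) ≠ 0) :
    let Jx : Matrix (Fin 3) (Fin 3) ℂ :=
      ((1 / Real.sqrt 2 : ℝ) : ℂ) • !![0, 1, 0; 1, 0, 1; 0, 1, 0]
    let Jy : Matrix (Fin 3) (Fin 3) ℂ :=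
      ((1 / Real.sqrt 2 : ℝ) : ℂ) •
        !![0, -Complex.I, 0; Complex.I, 0, -Complex.I; 0, Complex.I, 0]
    let Jz : Matrix (Fin 3) (Fin 3) ℂ := !![1, 0, 0; 0, 0, 0; 0, 0, -1]
    let r : ℝ := Real.sqrt (nx ^ 2 + ny ^ 2 + nz ^ 2)
    let ν : ℂ := (nx : ℂ) + Complex.I * (ny : ℂ)
    let μ : ℂ := ((nx ^ 2 + ny ^ 2 : ℝ) : ℂ)
    let c : ℂ := (Real.cos r : ℂ)
    let s : ℂ := (Real.sin r : ℂ)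
    let c' : ℂ := (Real.cos (r / 2) : ℂ)
    let s' : ℂ := (Real.sin (r / 2) : ℂ)
    NormedSpace.exp (Complex.I • ((nx : ℂ) • Jx + (ny : ℂ) • Jy + (nz : ℂ) • Jz)) =
      (1 / (4 * (r : ℂ) ^ 2)) •
        !![2 * (c + 1) * μ + 4 * c * (nz : ℂ) ^ 2 + 4 * Complex.I * (r : ℂ) * s * (nz : ℂ),
            4 * Complex.I * (Real.sqrt 2 : ℂ) * starRingEnd ℂ ν * s' *
              ((r : ℂ) * c' + Complex.I * (nz : ℂ) * s'),
            2 * (c - 1) * (starRingEnd ℂ ν) ^ 2;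
          2 * (Real.sqrt 2 : ℂ) * ν * ((c - 1) * (nz : ℂ) + Complex.I * (r : ℂ) * s),
            4 * (c * μ + (nz : ℂ) ^ 2),
            2 * (Real.sqrt 2 : ℂ) * starRingEnd ℂ ν *
              (-((c - 1) * (nz : ℂ)) + Complex.I * (r : ℂ) * s);
          2 * (c - 1) * ν ^ 2,
            2 * (Real.sqrt 2 : ℂ) * ν * (-((c - 1) * (nz : ℂ)) + Complex.I * (r : ℂ) * s),
            2 * (c + 1) * μ + 4 * c * (nz : ℂ) ^ 2 - 4 * Complex.I * (r : ℂ) * s * (nz : ℂ)] := by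
  intro Jx Jy Jz r ν μ c s c' s'
  have hn := sq_add_sq_add_sq_pos h
  have hr : r ≠ 0 := (Real.sqrt_pos.2 hn).ne'
  have hr0 : (r : ℂ) ≠ 0 := by exact_mod_cast hr
  have hI := Complex.I_sq
  have h2 : ((√2 : ℝ) : ℂ) ^ 2 = 2 := by exact_mod_cast Real.sq_sqrt zero_le_two
  have hr2 : (r : ℂ) ^ 2 = μ + nz ^ 2 := by
    rw [← Complex.ofReal_pow, Real.sq_sqrt hn.le]
    push_cast [μ]
    ring
  have hμ : starRingEnd ℂ ν * ν = μ := by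
    simp only [ν, μ, map_add, map_mul, Complex.conj_ofReal, Complex.conj_I]
    push_cast
    linear_combination (-ny ^ 2 : ℂ) * hI
  have hS : (nx : ℂ) • Jx + (ny : ℂ) • Jy + (nz : ℂ) • Jz =
      spinOneMatrix (nz : ℂ) (starRingEnd ℂ ν / √2) (ν / √2) := by
    ext i j
    fin_cases i <;> fin_cases j <;> simp [Jx, Jy, Jz, spinOneMatrix, ν] <;> ring
  have hpq : (nz : ℂ) ^ 2 + 2 * (starRingEnd ℂ ν / √2) * (ν / √2) = r ^ 2 := by grind
  have hs : s = 2 * s' * c' := by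
    simp only [s, s', c']
    exact_mod_cast Real.sin_eq_two_mul_sin_half_mul_cos_half r
  have hc : c = 1 - 2 * s' ^ 2 := by
    simp only [c, s']
    exact_mod_cast Real.cos_eq_one_sub_two_mul_sin_half_sq r
  rw [hS, exp_I_smul_spinOneMatrix hr hpq, spinOneMatrix_sq,
    show (Real.sin r : ℂ) = s from rfl, show (Real.cos r : ℂ) = c from rfl]
  clear_value c s c' s' μ ν r
  subst hc hs
  -- each entry is now an identity in `I, √2, r, ν, conj ν, μ, s', c'` modulo `hI, h2, hr2, hμ`
  ext i j
  fin_cases i <;> fin_cases j <;> simp [spinOneMatrix] <;> field_simp <;> grind
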